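/- arXiv:1602.01610 — 10 statements merged into one kernel-verified Lean document; each statement's English description precedes it below -/
import Mathlib

section
/- Let Z : ℂ → ℂ satisfy the completed-zeta axioms with residue r. Then there exists L ∈ ℂ such that Z(s+1/2) + Z(s−1/2) tends to L as s → 1/2 along s ≠ 1/2; that is, the simple poles at s = 1/2 of the two summands cancel and the sum has a removable singularity there. -/
/-! By the functional equation the residue `r` of `Z` at `1` becomes a residue `-r` at `0`, so the
two summands have simple poles at `1/2` with opposite residues. Hence `(s - 1/2)` times the sum
tends to `0`, and Riemann's removable singularity theorem gives the limit. -/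

open Filter Topology Asymptotics

theorem Complex.exists_tendsto_nhdsNE_of_tendsto_sub_smul {E : Type*} [NormedAddCommGroup E]
    [NormedSpace ℂ E] [CompleteSpace E] {f : ℂ → E} {c : ℂ}
    (hd : ∀ᶠ z in 𝓝[≠] c, DifferentiableAt ℂ f z)
    (hf : Tendsto (fun z => (z - c) • f z) (𝓝[≠] c) (𝓝 0)) :
    ∃ L, Tendsto f (𝓝[≠] c) (𝓝 L) := by
  have hconst : Tendsto (fun z => (z - c) • f c) (𝓝[≠] c) (𝓝 0) := by
    have : Tendsto (fun z => (z - c) • f c) (𝓝 c) (𝓝 ((c - c) • f c)) :=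
      Continuous.tendsto (by fun_prop) c
    simpa using this.mono_left nhdsWithin_le_nhds
  have hsub : (fun z => (z - c) • (f z - f c)) =o[𝓝[≠] c] fun _ => (1 : ℂ) :=
    (isLittleO_one_iff ℂ).2 (by simpa only [smul_sub, sub_zero] using hf.sub hconst)
  refine ⟨_, tendsto_limUnder_of_differentiable_on_punctured_nhds_of_isLittleO hd ?_⟩
  refine ((isBigO_refl (fun z => (z - c)⁻¹) _).smul_isLittleO hsub).congr' ?_ ?_
  · filter_upwards [self_mem_nhdsWithin] with z hz
    rw [smul_smul, inv_mul_cancel₀ (sub_ne_zero.2 hz), one_smul]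
  · simp

section

variable {𝕜 E : Type*} [NontriviallyNormedField 𝕜] [NormedAddCommGroup E] [NormedSpace 𝕜 E]
  {g : 𝕜 → E} {a b c : 𝕜} {l : E}

theorem Filter.Tendsto.sub_smul_comp_add_const
    (h : Tendsto (fun s => (s - c) • g s) (𝓝[≠] c) (𝓝 l)) (hc : a + b = c) :
    Tendsto (fun s => (s - a) • g (s + b)) (𝓝[≠] a) (𝓝 l) := by
  subst hc
  refine (h.comp map_add_right_nhdsNE.le).congr fun s => ?_
  simp only [Function.comp_apply, add_sub_add_right_eq_sub]

theorem Filter.Eventually.differentiableAt_comp_add_const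
    (h : ∀ᶠ s in 𝓝[≠] c, DifferentiableAt 𝕜 g s) (hc : a + b = c) :
    ∀ᶠ s in 𝓝[≠] a, DifferentiableAt 𝕜 (fun s => g (s + b)) s := by
  subst hc
  have hshift : Tendsto (· + b) (𝓝[≠] a) (𝓝[≠] (a + b)) := map_add_right_nhdsNE.le
  exact (hshift.eventually h).mono fun s hs => hs.comp s (differentiableAt_id.add_const b)

theorem Filter.Tendsto.sub_smul_of_forall_apply_sub_eq (hg : ∀ s, g (b - s) = g s)
    (h : Tendsto (fun s => (s - c) • g s) (𝓝[≠] c) (𝓝 l)) :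
    Tendsto (fun s => (s - (b - c)) • g s) (𝓝[≠] (b - c)) (𝓝 (-l)) := by
  have hreflect : Tendsto (b - ·) (𝓝[≠] (b - c)) (𝓝[≠] c) := by
    rw [Tendsto, map_subLeft_nhdsNE, sub_sub_cancel]
  refine (h.neg.comp hreflect).congr fun s => ?_
  rw [Function.comp_apply, hg, ← neg_smul]
  congr 1
  ring

theorem eventually_differentiableAt_of_forall_notMem {S : Set 𝕜} (hS : S.Finite)
    (hg : ∀ s ∉ S, DifferentiableAt 𝕜 g s) (c : 𝕜) :
    ∀ᶠ s in 𝓝[≠] c, DifferentiableAt 𝕜 g s :=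
  mem_of_superset (nhdsNE_of_nhdsNE_sdiff_finite univ_mem hS) fun s hs => hg s hs.2

end

theorem completed_zeta_sum_removable_general (Z : ℂ → ℂ) (r : ℝ)
    (hdiff : ∀ s : ℂ, s ≠ 0 → s ≠ 1 → DifferentiableAt ℂ Z s)
    (hfe : ∀ s : ℂ, Z (1 - s) = Z s)
    (hres : Tendsto (fun s : ℂ => (s - 1) * Z s) (𝓝[≠] 1) (𝓝 (r : ℂ))) :
    ∃ L : ℂ, Tendsto (fun s : ℂ => Z (s + 1/2) + Z (s - 1/2)) (𝓝[≠] (1/2)) (𝓝 L) := by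
  have hZ := eventually_differentiableAt_of_forall_notMem (S := {0, 1}) (Set.toFinite _)
    fun s hs => hdiff s (by simp_all) (by simp_all)
  have hres₀ := hres.sub_smul_of_forall_apply_sub_eq hfe
  have h₁ : (1/2 : ℂ) + 1/2 = 1 := by norm_num
  have h₀ : (1/2 : ℂ) + -(1/2) = 1 - 1 := by norm_num
  refine Complex.exists_tendsto_nhdsNE_of_tendsto_sub_smul ?_ ?_
  · filter_upwards [(hZ 1).differentiableAt_comp_add_const h₁,
      (hZ (1 - 1)).differentiableAt_comp_add_const h₀] with s hs₁ hs₀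
    simpa only [← sub_eq_add_neg] using hs₁.fun_add hs₀
  · simpa [mul_add, ← sub_eq_add_neg] using
      (hres.sub_smul_comp_add_const h₁).add (hres₀.sub_smul_comp_add_const h₀)

theorem completed_zeta_sum_removable (Z : ℂ → ℂ) (r : ℝ)
    (hdiff : ∀ s : ℂ, s ≠ 0 → s ≠ 1 → DifferentiableAt ℂ Z s)
    (hfe : ∀ s : ℂ, Z (1 - s) = Z s)
    (hr : 0 < r)
    (hres : Tendsto (fun s : ℂ => (s - 1) * Z s) (𝓝[≠] 1) (𝓝 (r : ℂ))) :
    ∃ L : ℂ, Tendsto (fun s : ℂ => Z (s + 1/2) + Z (s - 1/2)) (𝓝[≠] (1/2)) (𝓝 L) :=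
  completed_zeta_sum_removable_general Z r hdiff hfe hres
end

section
/- Let Z : ℂ → ℂ satisfy the completed-zeta axioms with residue r. Then (s−1/2)²·( Z(s+1/2)³ + 3·Z(s−1/2)·Z(s+1/2)² + 3·Z(s−1/2)²·Z(s+1/2) + Z(s−1/2)³ )·Z(2s) tends to 0 as s → 1/2 along s ≠ 1/2. (Each of the four summands multiplied by Z(2s) has a pole of order 4 at s = 1/2, but the Laurent coefficients of order −4, −3 and −2 cancel in the sum; this is the key cancellation of the order-4 poles of the intertwining operators indexed by Σ_{(F×F×F, Id, 1/2, 4)} in the constant term of the degenerate Eisenstein series on split Spin₈ at s = 1/2 with trivial character.) -/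
open Filter Topology

private lemma tendsto_add_punctured (a b : ℂ) :
    Tendsto (fun s : ℂ => s + a) (𝓝[≠] b) (𝓝[≠] (b + a)) := by
  rw [tendsto_nhdsWithin_iff]
  refine ⟨((continuous_id.add continuous_const).tendsto b).mono_left nhdsWithin_le_nhds, ?_⟩
  filter_upwards [self_mem_nhdsWithin] with s hs
  simp only [Set.mem_compl_iff, Set.mem_singleton_iff] at hs ⊢
  exact fun h => hs (by linear_combination h)

private lemma tendsto_sub_punctured (a : ℂ) :
    Tendsto (fun s : ℂ => 1 - s) (𝓝[≠] a) (𝓝[≠] (1 - a)) := by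
  rw [tendsto_nhdsWithin_iff]
  refine ⟨((continuous_const.sub continuous_id).tendsto a).mono_left nhdsWithin_le_nhds, ?_⟩
  filter_upwards [self_mem_nhdsWithin] with s hs
  simp only [Set.mem_compl_iff, Set.mem_singleton_iff] at hs ⊢
  exact fun h => hs (by linear_combination -h)

private lemma tendsto_two_mul_punctured :
    Tendsto (fun s : ℂ => 2 * s) (𝓝[≠] (1/2 : ℂ)) (𝓝[≠] 1) := by
  rw [tendsto_nhdsWithin_iff]
  constructor
  · have hc : Continuous (fun s : ℂ => 2 * s) := continuous_const.mul continuous_id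
    have h1 := hc.tendsto (1/2 : ℂ)
    norm_num at h1
    exact h1.mono_left nhdsWithin_le_nhds
  · filter_upwards [self_mem_nhdsWithin] with s hs
    simp only [Set.mem_compl_iff, Set.mem_singleton_iff] at hs ⊢
    exact fun h => hs (by linear_combination h / 2)

theorem completed_zeta_order4_cancellation (Z : ℂ → ℂ) (r : ℝ)
    (hdiff : ∀ s : ℂ, s ≠ 0 → s ≠ 1 → DifferentiableAt ℂ Z s)
    (hfe : ∀ s : ℂ, Z (1 - s) = Z s)
    (hr : 0 < r)
    (hres : Tendsto (fun s : ℂ => (s - 1) * Z s) (𝓝[≠] 1) (𝓝 (r : ℂ))) :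
    Tendsto (fun s : ℂ => (s - 1/2)^2 *
      (Z (s + 1/2)^3 + 3 * Z (s - 1/2) * Z (s + 1/2)^2 +
        3 * Z (s - 1/2)^2 * Z (s + 1/2) + Z (s - 1/2)^3) * Z (2*s))
      (𝓝[≠] (1/2)) (𝓝 0) := by
  set F : ℂ → ℂ := fun u => u * Z (1 + u) + u * Z u with hF_def
  have t1 : Tendsto (fun u : ℂ => 1 + u) (𝓝[≠] (0 : ℂ)) (𝓝[≠] 1) := by
    have := tendsto_add_punctured 1 0
    simpa [add_comm] using this
  have hA : Tendsto (fun u : ℂ => u * Z (1 + u)) (𝓝[≠] (0 : ℂ)) (𝓝 (r : ℂ)) := by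
    refine (hres.comp t1).congr fun u => ?_
    simp only [Function.comp_apply]
    ring_nf
  have t2 : Tendsto (fun u : ℂ => 1 - u) (𝓝[≠] (0 : ℂ)) (𝓝[≠] 1) := by
    simpa using tendsto_sub_punctured 0
  have hB : Tendsto (fun u : ℂ => u * Z u) (𝓝[≠] (0 : ℂ)) (𝓝 (-(r : ℂ))) := by
    refine ((hres.comp t2).neg).congr fun u => ?_
    simp only [Function.comp_apply, hfe u]
    ring
  have hFlim : Tendsto F (𝓝[≠] (0 : ℂ)) (𝓝 0) := by
    have := hA.add hB
    simpa using this
  set G : ℂ → ℂ := Function.update F 0 0 with hG_def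
  have hGF : ∀ u : ℂ, u ≠ 0 → G u = F u := fun u hu => Function.update_of_ne hu _ _
  have hG0 : G 0 = 0 := Function.update_self _ _ _
  have hGcont : ContinuousAt G 0 := by
    rw [← continuousWithinAt_compl_self]
    rw [ContinuousWithinAt, hG0]
    refine hFlim.congr' ?_
    filter_upwards [self_mem_nhdsWithin] with u hu
    exact (hGF u hu).symm
  have hGdiff : ∀ᶠ u in 𝓝[≠] (0 : ℂ), DifferentiableAt ℂ G u := by
    have hball : ∀ᶠ u in 𝓝[≠] (0 : ℂ), u ∈ Metric.ball (0 : ℂ) 1 ∧ u ≠ 0 := by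
      filter_upwards [self_mem_nhdsWithin,
        nhdsWithin_le_nhds (Metric.ball_mem_nhds (0 : ℂ) one_pos)] with u h1 h2
      exact ⟨h2, h1⟩
    filter_upwards [hball] with u hu
    obtain ⟨hu1, hu0⟩ := hu
    have hnorm : ‖u‖ < 1 := by simpa using hu1
    have hu1' : u ≠ 1 := by rintro rfl; simp at hnorm
    have hum1 : u ≠ -1 := by rintro rfl; simp at hnorm
    have hFd : DifferentiableAt ℂ F u := by
      apply DifferentiableAt.add
      · exact differentiableAt_id.mul ((hdiff (1 + u)
          (by intro h; exact hum1 (by linear_combination h))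
          (by simpa using hu0)).comp u
          ((differentiableAt_const _).add differentiableAt_id))
      · exact differentiableAt_id.mul (hdiff u hu0 hu1')
    refine hFd.congr_of_eventuallyEq ?_
    filter_upwards [isOpen_compl_singleton.mem_nhds hu0] with v hv
    exact hGF v hv
  have hGan : AnalyticAt ℂ G 0 :=
    Complex.analyticAt_of_differentiable_on_punctured_nhds_of_continuousAt hGdiff hGcont
  have hslope : Tendsto (slope G 0) (𝓝[≠] (0 : ℂ)) (𝓝 (deriv G 0)) :=
    hasDerivAt_iff_tendsto_slope.mp hGan.differentiableAt.hasDerivAt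
  have t3 : Tendsto (fun s : ℂ => s - 1/2) (𝓝[≠] ((1:ℂ)/2)) (𝓝[≠] 0) := by
    have := tendsto_add_punctured (-(1/2)) (1/2)
    simp only [sub_eq_add_neg]
    convert this using 2 <;> ring
  have hsum : Tendsto (fun s : ℂ => Z (s + 1/2) + Z (s - 1/2)) (𝓝[≠] ((1:ℂ)/2))
      (𝓝 (deriv G 0)) := by
    refine (hslope.comp t3).congr' ?_
    filter_upwards [self_mem_nhdsWithin] with s hs
    have hune : s - 1/2 ≠ 0 := sub_ne_zero.mpr hs
    have hsl : slope G 0 (s - 1/2) = G (s - 1/2) / (s - 1/2) := by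
      rw [slope_def_field, hG0, sub_zero, sub_zero]
    simp only [Function.comp_apply, hsl, hGF _ hune, hF_def]
    have h12 : (1 : ℂ) + (s - 1/2) = s + 1/2 := by ring
    rw [h12, div_eq_iff hune]
    ring
  have h3 : Tendsto (fun s : ℂ => (s - 1/2) * Z (2 * s)) (𝓝[≠] ((1:ℂ)/2))
      (𝓝 ((r : ℂ) / 2)) := by
    have h := (hres.comp tendsto_two_mul_punctured).const_mul ((1:ℂ)/2)
    rw [show (1:ℂ)/2 * r = (r : ℂ)/2 by ring] at h
    refine h.congr fun s => ?_
    simp only [Function.comp_apply]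
    ring
  have hu0 : Tendsto (fun s : ℂ => s - 1/2) (𝓝[≠] ((1:ℂ)/2)) (𝓝 0) :=
    t3.mono_right nhdsWithin_le_nhds
  have hmain := (hu0.mul (hsum.pow 3)).mul h3
  rw [show (0 : ℂ) * (deriv G 0) ^ 3 * ((r : ℂ) / 2) = 0 by ring] at hmain
  refine hmain.congr fun s => ?_
  ring
end

section
/- Let Z : ℂ → ℂ satisfy the completed-zeta axioms with residue r. Then (s−1/2)²·( Z(s+1/2)³·Z(2s+1) + 3·Z(s−1/2)·Z(s+1/2)·Z(2s)·Z(s+3/2) + Z(s−1/2)²·Z(s−3/2)·Z(2s) ) tends to 0 as s → 1/2 along s ≠ 1/2. (Each of the three summands has a pole of order 3 at s = 1/2, but the Laurent coefficients of order −3 and −2 cancel in the sum; this is the cancellation of the order-3 poles of the intertwining operators indexed by Σ₃∖Σ₄ in the split Spin₈ case at s = 1/2 with trivial character.) -/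
/-!
Put `u = s - 1/2`, `g u = u Z(u+1)` and `A u = Z(u+2)`. By the removable singularity theorem `g`
extends holomorphically to `u = 0` (with `g 0 = r`), and `A` is holomorphic at `0`. Using
`Z(u) = Z(1-u)` and `Z(u-1) = Z(2-u)`, the expression becomes `G(u)/u` with
`G(u) = g(u)³A(2u) - 3/2·g(-u)g(u)g(2u)A(u) + 1/2·g(-u)²g(2u)A(-u)`.
Now `G(0) = (1 - 3/2 + 1/2)·r³A(0) = 0`, and in `G'(0)` the coefficients of `g'(0)` (`3 - 3 + 0`)
and of `A'(0)` (`2 - 3/2 - 1/2`) vanish as well, so `G(u)/u → G'(0) = 0`.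
-/

open Filter Topology Function

namespace Complex

variable {E : Type*} [NormedAddCommGroup E] [NormedSpace ℂ E] [CompleteSpace E]

theorem analyticAt_update_sub_smul_of_tendsto {f : ℂ → E} {c : ℂ} {L : E}
    (hf : ∀ᶠ s in 𝓝[≠] c, DifferentiableAt ℂ f s)
    (hL : Tendsto (fun s => (s - c) • f s) (𝓝[≠] c) (𝓝 L)) :
    AnalyticAt ℂ (update (fun s => (s - c) • f s) c L) c := by
  refine analyticAt_of_differentiable_on_punctured_nhds_of_continuousAt ?_
    (continuousAt_update_same.2 hL)
  filter_upwards [hf, self_mem_nhdsWithin] with s hs hsc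
  have hupd : update (fun s => (s - c) • f s) c L =ᶠ[𝓝 s] fun s => (s - c) • f s := by
    filter_upwards [isOpen_ne.mem_nhds hsc] with t ht using update_of_ne ht _ _
  exact ((differentiableAt_id.sub_const c).smul hs).congr_of_eventuallyEq hupd

end Complex

theorem HasDerivAt.comp_const_mul {𝕜 F : Type*} [NontriviallyNormedField 𝕜] [NormedAddCommGroup F]
    [NormedSpace 𝕜 F] {f : 𝕜 → F} {f' : F} (k x : 𝕜) (hf : HasDerivAt f f' (k * x)) :
    HasDerivAt (fun u => f (k * u)) (k • f') x := by
  simpa [Function.comp_def] using hf.scomp x ((hasDerivAt_id x).const_mul k)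

noncomputable def cancellingNumerator (g A : ℂ → ℂ) (u : ℂ) : ℂ :=
  g u ^ 3 * A (2 * u) - 3 / 2 * (g (-u) * g u * g (2 * u) * A u)
    + 1 / 2 * (g (-u) ^ 2 * g (2 * u) * A (-u))

theorem cancellingNumerator_zero (g A : ℂ → ℂ) : cancellingNumerator g A 0 = 0 := by
  simp only [cancellingNumerator, neg_zero, mul_zero]
  ring

theorem hasDerivAt_cancellingNumerator {g A : ℂ → ℂ} (hg : DifferentiableAt ℂ g 0)
    (hA : DifferentiableAt ℂ A 0) : HasDerivAt (cancellingNumerator g A) 0 0 := by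
  have hg₁ := hg.hasDerivAt
  have hA₁ := hA.hasDerivAt
  have hgScaled (k : ℂ) : HasDerivAt (fun u => g (k * u)) (k * deriv g 0) 0 :=
    .comp_const_mul k 0 (by rw [mul_zero]; exact hg₁)
  have hAScaled (k : ℂ) : HasDerivAt (fun u => A (k * u)) (k * deriv A 0) 0 :=
    .comp_const_mul k 0 (by rw [mul_zero]; exact hA₁)
  have hgNeg := hgScaled (-1)
  have hgTwo := hgScaled 2
  have hANeg := hAScaled (-1)
  have hATwo := hAScaled 2
  simp only [neg_one_mul] at hgNeg hANeg
  have hsum := ((hg₁.pow 3).mul hATwo |>.sub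
    ((((hgNeg.mul hg₁).mul hgTwo).mul hA₁).const_mul (3 / 2 : ℂ))).add
    ((((hgNeg.pow 2).mul hgTwo).mul hANeg).const_mul (1 / 2 : ℂ))
  refine hsum.congr_deriv ?_
  simp only [Pi.mul_apply, Pi.pow_apply, neg_zero, mul_zero]
  ring

theorem tendsto_cancellingNumerator_div {g A : ℂ → ℂ} (hg : DifferentiableAt ℂ g 0)
    (hA : DifferentiableAt ℂ A 0) :
    Tendsto (fun u => cancellingNumerator g A u / u) (𝓝[≠] 0) (𝓝 0) := by
  refine (hasDerivAt_cancellingNumerator hg hA).tendsto_slope_zero.congr fun u => ?_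
  simp [cancellingNumerator_zero, div_eq_inv_mul]

theorem sq_mul_eq_cancellingNumerator_div {Z g : ℂ → ℂ} (hfe : ∀ s, Z (1 - s) = Z s)
    (hg : ∀ u ≠ 0, g u = u * Z (u + 1)) {s : ℂ} (hs : s ≠ 1 / 2) :
    (s - 1/2)^2 *
      (Z (s + 1/2)^3 * Z (2*s + 1) +
        3 * Z (s - 1/2) * Z (s + 1/2) * Z (2*s) * Z (s + 3/2) +
        Z (s - 1/2)^2 * Z (s - 3/2) * Z (2*s)) =
      cancellingNumerator g (fun u => Z (u + 2)) (s - 1/2) / (s - 1/2) := by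
  have hu : s - 1/2 ≠ 0 := sub_ne_zero.2 hs
  have h₁ : g (s - 1/2) = (s - 1/2) * Z (s + 1/2) := by
    rw [hg _ hu]; ring_nf
  have hNeg : g (-(s - 1/2)) = -(s - 1/2) * Z (s - 1/2) := by
    rw [hg _ (neg_ne_zero.2 hu), ← hfe (s - 1/2)]; ring_nf
  have h₂ : g (2 * (s - 1/2)) = 2 * (s - 1/2) * Z (2 * s) := by
    rw [hg _ (mul_ne_zero two_ne_zero hu)]; ring_nf
  have hANeg : Z (-(s - 1/2) + 2) = Z (s - 3/2) := by
    rw [← hfe (s - 3/2)]; ring_nf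
  simp only [cancellingNumerator, h₁, hNeg, h₂, hANeg]
  rw [eq_div_iff hu]
  ring_nf

theorem completed_zeta_order3_cancellation_general (Z : ℂ → ℂ) (r : ℝ)
    (hdiff : ∀ s : ℂ, s ≠ 0 → s ≠ 1 → DifferentiableAt ℂ Z s)
    (hfe : ∀ s : ℂ, Z (1 - s) = Z s)
    (hres : Tendsto (fun s : ℂ => (s - 1) * Z s) (𝓝[≠] 1) (𝓝 (r : ℂ))) :
    Tendsto (fun s : ℂ => (s - 1/2)^2 *
      (Z (s + 1/2)^3 * Z (2*s + 1) +
        3 * Z (s - 1/2) * Z (s + 1/2) * Z (2*s) * Z (s + 3/2) +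
        Z (s - 1/2)^2 * Z (s - 3/2) * Z (2*s)))
      (𝓝[≠] (1/2)) (𝓝 0) := by
  set g := update (fun s : ℂ => (s - 1) * Z s) 1 (r : ℂ)
  have hZ : ∀ᶠ s in 𝓝[≠] 1, DifferentiableAt ℂ Z s := by
    filter_upwards [nhdsWithin_le_nhds (isOpen_ne.mem_nhds one_ne_zero), self_mem_nhdsWithin]
      with s hs0 hs1 using hdiff s hs0 hs1
  have hg : DifferentiableAt ℂ (fun u => g (u + 1)) 0 :=
    differentiableAt_comp_add_const.2 <| by
      simpa using (Complex.analyticAt_update_sub_smul_of_tendsto hZ hres).differentiableAt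
  have hA : DifferentiableAt ℂ (fun u => Z (u + 2)) 0 :=
    differentiableAt_comp_add_const.2 <| hdiff _ (by norm_num) (by norm_num)
  have hshift : Tendsto (· - 1/2) (𝓝[≠] (1/2 : ℂ)) (𝓝[≠] 0) := by
    have h := (map_subRight_nhdsNE (c := (1/2 : ℂ)) (a := 1/2)).le
    rwa [sub_self] at h
  refine ((tendsto_cancellingNumerator_div hg hA).comp hshift).congr' ?_
  filter_upwards [self_mem_nhdsWithin] with s hs
  refine (sq_mul_eq_cancellingNumerator_div hfe (fun u hu => ?_) hs).symm
  simp only [g, update_of_ne (show u + 1 ≠ 1 by simpa using hu), add_sub_cancel_right]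

theorem completed_zeta_order3_cancellation (Z : ℂ → ℂ) (r : ℝ)
    (hdiff : ∀ s : ℂ, s ≠ 0 → s ≠ 1 → DifferentiableAt ℂ Z s)
    (hfe : ∀ s : ℂ, Z (1 - s) = Z s)
    (hr : 0 < r)
    (hres : Tendsto (fun s : ℂ => (s - 1) * Z s) (𝓝[≠] 1) (𝓝 (r : ℂ))) :
    Tendsto (fun s : ℂ => (s - 1/2)^2 *
      (Z (s + 1/2)^3 * Z (2*s + 1) +
        3 * Z (s - 1/2) * Z (s + 1/2) * Z (2*s) * Z (s + 3/2) +
        Z (s - 1/2)^2 * Z (s - 3/2) * Z (2*s)))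
      (𝓝[≠] (1/2)) (𝓝 0) :=
  completed_zeta_order3_cancellation_general Z r hdiff hfe hres
end

section
/- Let Z : ℂ → ℂ satisfy the completed-zeta axioms with residue r. Then (s−1/2)²·( Z(s+1/2)² + Z(s+1/2)·Z(s−1/2) ) tends to 0 as s → 1/2 along s ≠ 1/2. (Each summand has a pole of order 2 at s = 1/2, but the order-2 parts cancel, leaving at most a simple pole; this is the cancellation of the double poles of the pairs M(w₍₂₁₃₎)+M(w₍₂₁₃₂₎), M(w₍₂₁₄₎)+M(w₍₂₁₄₂₎), M(w₍₂₃₄₎)+M(w₍₂₃₄₂₎) in the split Spin₈ case at s = 1/2 with trivial character.) -/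
open Filter Topology

theorem completed_zeta_order2_cancellation (Z : ℂ → ℂ) (r : ℝ)
    (hdiff : ∀ s : ℂ, s ≠ 0 → s ≠ 1 → DifferentiableAt ℂ Z s)
    (hfe : ∀ s : ℂ, Z (1 - s) = Z s)
    (hr : 0 < r)
    (hres : Tendsto (fun s : ℂ => (s - 1) * Z s) (𝓝[≠] 1) (𝓝 (r : ℂ))) :
    Tendsto (fun s : ℂ => (s - 1/2)^2 *
      (Z (s + 1/2)^2 + Z (s + 1/2) * Z (s - 1/2)))
      (𝓝[≠] (1/2)) (𝓝 0) := by
  have h1 : Tendsto (fun s : ℂ => s + 1/2) (𝓝[≠] (1/2)) (𝓝[≠] 1) := by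
    apply tendsto_nhdsWithin_of_tendsto_nhds_of_eventually_within
    · exact ((Continuous.tendsto' (by continuity) (1/2 : ℂ) 1 (by norm_num))).mono_left
        nhdsWithin_le_nhds
    · filter_upwards [self_mem_nhdsWithin] with s hs
      simp only [Set.mem_compl_iff, Set.mem_singleton_iff] at hs ⊢
      intro h; exact hs (by linear_combination h)
  have h2 : Tendsto (fun s : ℂ => 3/2 - s) (𝓝[≠] (1/2)) (𝓝[≠] 1) := by
    apply tendsto_nhdsWithin_of_tendsto_nhds_of_eventually_within
    · exact ((Continuous.tendsto' (by continuity) (1/2 : ℂ) 1 (by norm_num))).mono_left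
        nhdsWithin_le_nhds
    · filter_upwards [self_mem_nhdsWithin] with s hs
      simp only [Set.mem_compl_iff, Set.mem_singleton_iff] at hs ⊢
      intro h; exact hs (by linear_combination -h)
  have hf : Tendsto (fun s : ℂ => (s - 1/2) * Z (s + 1/2)) (𝓝[≠] (1/2)) (𝓝 (r : ℂ)) := by
    have := hres.comp h1
    exact this.congr (fun s => by simp only [Function.comp]; ring)
  have hg : Tendsto (fun s : ℂ => (s - 1/2) * Z (s - 1/2)) (𝓝[≠] (1/2)) (𝓝 (-(r : ℂ))) := by
    have := (hres.comp h2).neg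
    refine this.congr (fun s => ?_)
    have he : ((3:ℂ)/2 - s) = 1 - (s - 1/2) := by ring
    simp only [Function.comp]
    rw [he, hfe (s - 1/2)]
    ring
  have := hf.mul (hf.add hg)
  have h0 : (r : ℂ) * ((r : ℂ) + -(r : ℂ)) = 0 := by ring
  rw [h0] at this
  exact this.congr (fun s => by ring)
end

section
/- Let Z_F : ℂ → ℂ and Z_K : ℂ → ℂ satisfy the completed-zeta axioms with residues r_F and r_K respectively. Then (s−1/2)²·( Z_F(s+1/2)·Z_K(s+1/2) + Z_F(s−1/2)·Z_K(s+1/2) + Z_F(s+1/2)·Z_K(s−1/2) + Z_F(s−1/2)·Z_K(s−1/2) )·Z_F(2s) tends to 0 as s → 1/2 along s ≠ 1/2. (Each of the four summands multiplied by Z_F(2s) has a pole of order 3 at s = 1/2, but the Laurent coefficients of order −3 and −2 cancel in the sum; this is the cancellation of the order-3 poles of the four intertwining operators indexed by {w₍₂₁₃₂₎, w₍₂₁₃₂₁₎, w₍₂₁₃₂₃₎, w₍₂₁₃₂₁₃₎} in the case E = F×K at s = 1/2 with trivial character, applied with Z_F = ẑ_F and Z_K = ẑ_K.) -/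
/-!
The bracket factors as `A_F(s) * A_K(s)` with `A(s) = Z(s + 1/2) + Z(s - 1/2)`. Writing
`t = s - 1/2`, the functional equation turns `A` into `Z(1 + t) + Z(1 - t)`, in which the simple
poles at `t = 0` cancel: if `h(s) = (s - 1) Z(s)`, holomorphic at `1` by Riemann's removable
singularity theorem, then `Z(1 + t) + Z(1 - t) = (h(1 + t) - h(1 - t)) / t → 2 h'(1)`.
Hence the expression equals `(1/2) (s - 1/2) A_F(s) A_K(s) (2s - 1) Z_F(2s)`, which tends to
`0 · c_F · c_K · r_F = 0`.
-/

open Filter Topology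

theorem HasDerivAt.tendsto_symmetric_slope_zero {𝕜 F : Type*} [NontriviallyNormedField 𝕜]
    [NormedAddCommGroup F] [NormedSpace 𝕜 F] {f : 𝕜 → F} {f' : F} {x : 𝕜}
    (hf : HasDerivAt f f' x) :
    Tendsto (fun t ↦ t⁻¹ • (f (x + t) - f (x - t))) (𝓝[≠] 0) (𝓝 ((2 : 𝕜) • f')) := by
  have hneg : Tendsto (fun t : 𝕜 ↦ -t) (𝓝[≠] 0) (𝓝[≠] 0) := by
    simpa using (hasDerivAt_neg (0 : 𝕜)).tendsto_nhdsNE (neg_ne_zero.2 one_ne_zero)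
  rw [two_smul]
  refine (hf.tendsto_slope_zero.add (hf.tendsto_slope_zero.comp hneg)).congr fun t ↦ ?_
  simp only [Function.comp_apply, inv_neg, neg_smul, ← sub_eq_add_neg, ← smul_sub]
  abel_nf

variable {E : Type*} [NormedAddCommGroup E] [NormedSpace ℂ E]

theorem differentiableAt_update_sub_smul_of_tendsto [CompleteSpace E] {Z : ℂ → E} {a : ℂ}
    {r : E} (hZ : ∀ᶠ s in 𝓝[≠] a, DifferentiableAt ℂ Z s)
    (hres : Tendsto (fun s ↦ (s - a) • Z s) (𝓝[≠] a) (𝓝 r)) :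
    DifferentiableAt ℂ (Function.update (fun s ↦ (s - a) • Z s) a r) a := by
  refine (Complex.analyticAt_of_differentiable_on_punctured_nhds_of_continuousAt ?_
    (continuousAt_update_same.2 hres)).differentiableAt
  filter_upwards [hZ, self_mem_nhdsWithin] with s hs (hsa : s ≠ a)
  refine ((differentiableAt_id.sub_const a).smul hs).congr_of_eventuallyEq ?_
  exact (Function.update_eventuallyEq _ a r).filter_mono
    (le_principal_iff.2 (compl_singleton_mem_nhds hsa))

theorem exists_tendsto_add_of_tendsto_sub_smul [CompleteSpace E] {Z : ℂ → E} {a : ℂ}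
    {r : E} (hZ : ∀ᶠ s in 𝓝[≠] a, DifferentiableAt ℂ Z s)
    (hres : Tendsto (fun s ↦ (s - a) • Z s) (𝓝[≠] a) (𝓝 r)) :
    ∃ c, Tendsto (fun t ↦ Z (a + t) + Z (a - t)) (𝓝[≠] 0) (𝓝 c) := by
  refine ⟨_, (differentiableAt_update_sub_smul_of_tendsto hZ hres).hasDerivAt
    |>.tendsto_symmetric_slope_zero |>.congr' ?_⟩
  filter_upwards [self_mem_nhdsWithin] with t (ht : t ≠ 0)
  rw [Function.update_of_ne (by simpa using ht), Function.update_of_ne (by simpa using ht)]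
  simp only [add_sub_cancel_left, sub_sub_cancel_left, neg_smul, sub_neg_eq_add, ← smul_add,
    inv_smul_smul₀ ht]

theorem exists_tendsto_add_sub_half_of_functional_equation {Z : ℂ → ℂ} {r : ℂ}
    (hdiff : ∀ s : ℂ, s ≠ 0 → s ≠ 1 → DifferentiableAt ℂ Z s) (hfe : ∀ s, Z (1 - s) = Z s)
    (hres : Tendsto (fun s ↦ (s - 1) * Z s) (𝓝[≠] 1) (𝓝 r)) :
    ∃ c, Tendsto (fun s ↦ Z (s + 1/2) + Z (s - 1/2)) (𝓝[≠] (1/2)) (𝓝 c) := by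
  have hZ : ∀ᶠ s in 𝓝[≠] (1 : ℂ), DifferentiableAt ℂ Z s := by
    filter_upwards [nhdsWithin_le_nhds (eventually_ne_nhds one_ne_zero), self_mem_nhdsWithin]
      with s hs0 hs1 using hdiff s hs0 hs1
  have hshift : Tendsto (fun s : ℂ ↦ s - 1/2) (𝓝[≠] (1/2)) (𝓝[≠] 0) := by
    convert ((hasDerivAt_id (1/2 : ℂ)).sub_const (1/2)).tendsto_nhdsNE one_ne_zero using 2 <;>
      simp
  obtain ⟨c, hc⟩ := exists_tendsto_add_of_tendsto_sub_smul hZ hres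
  refine ⟨c, (hc.comp hshift).congr fun s ↦ ?_⟩
  rw [Function.comp_apply, ← hfe (s - 1/2)]
  ring_nf

theorem completed_zeta_FK_order3_cancellation_general (Z_F Z_K : ℂ → ℂ) (r_F r_K : ℝ)
    (hdiff_F : ∀ s : ℂ, s ≠ 0 → s ≠ 1 → DifferentiableAt ℂ Z_F s)
    (hfe_F : ∀ s : ℂ, Z_F (1 - s) = Z_F s)
    (hres_F : Tendsto (fun s : ℂ => (s - 1) * Z_F s) (𝓝[≠] 1) (𝓝 (r_F : ℂ)))
    (hdiff_K : ∀ s : ℂ, s ≠ 0 → s ≠ 1 → DifferentiableAt ℂ Z_K s)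
    (hfe_K : ∀ s : ℂ, Z_K (1 - s) = Z_K s)
    (hres_K : Tendsto (fun s : ℂ => (s - 1) * Z_K s) (𝓝[≠] 1) (𝓝 (r_K : ℂ))) :
    Tendsto (fun s : ℂ => (s - 1/2)^2 *
      (Z_F (s + 1/2) * Z_K (s + 1/2) + Z_F (s - 1/2) * Z_K (s + 1/2) +
        Z_F (s + 1/2) * Z_K (s - 1/2) + Z_F (s - 1/2) * Z_K (s - 1/2)) * Z_F (2*s))
      (𝓝[≠] (1/2)) (𝓝 0) := by
  obtain ⟨c_F, hF⟩ := exists_tendsto_add_sub_half_of_functional_equation hdiff_F hfe_F hres_F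
  obtain ⟨c_K, hK⟩ := exists_tendsto_add_sub_half_of_functional_equation hdiff_K hfe_K hres_K
  have hdouble : Tendsto (fun s : ℂ ↦ 2 * s) (𝓝[≠] (1/2)) (𝓝[≠] 1) := by
    convert ((hasDerivAt_id (1/2 : ℂ)).const_mul 2).tendsto_nhdsNE (by norm_num) using 2 <;>
      norm_num
  have hpole : Tendsto (fun s ↦ (2 * s - 1) * Z_F (2 * s)) (𝓝[≠] (1/2)) (𝓝 (r_F : ℂ)) :=
    hres_F.comp hdouble
  have hlin : Tendsto (fun s : ℂ ↦ s - 1/2) (𝓝[≠] (1/2)) (𝓝 0) :=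
    tendsto_nhdsWithin_of_tendsto_nhds <| by
      simpa using (continuous_sub_right (1/2 : ℂ)).tendsto (1/2)
  simpa only [mul_zero, zero_mul] using
    ((((hlin.mul hF).mul hK).mul hpole).const_mul (1/2 : ℂ)).congr fun s ↦ by ring

theorem completed_zeta_FK_order3_cancellation (Z_F Z_K : ℂ → ℂ) (r_F r_K : ℝ)
    (hdiff_F : ∀ s : ℂ, s ≠ 0 → s ≠ 1 → DifferentiableAt ℂ Z_F s)
    (hfe_F : ∀ s : ℂ, Z_F (1 - s) = Z_F s)
    (hr_F : 0 < r_F)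
    (hres_F : Tendsto (fun s : ℂ => (s - 1) * Z_F s) (𝓝[≠] 1) (𝓝 (r_F : ℂ)))
    (hdiff_K : ∀ s : ℂ, s ≠ 0 → s ≠ 1 → DifferentiableAt ℂ Z_K s)
    (hfe_K : ∀ s : ℂ, Z_K (1 - s) = Z_K s)
    (hr_K : 0 < r_K)
    (hres_K : Tendsto (fun s : ℂ => (s - 1) * Z_K s) (𝓝[≠] 1) (𝓝 (r_K : ℂ))) :
    Tendsto (fun s : ℂ => (s - 1/2)^2 *
      (Z_F (s + 1/2) * Z_K (s + 1/2) + Z_F (s - 1/2) * Z_K (s + 1/2) +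
        Z_F (s + 1/2) * Z_K (s - 1/2) + Z_F (s - 1/2) * Z_K (s - 1/2)) * Z_F (2*s))
      (𝓝[≠] (1/2)) (𝓝 0) :=
  completed_zeta_FK_order3_cancellation_general Z_F Z_K r_F r_K hdiff_F hfe_F hres_F hdiff_K hfe_K
    hres_K
end

section
/- Let Z_F : ℂ → ℂ and Z_K : ℂ → ℂ satisfy the completed-zeta axioms with residues r_F and r_K respectively, and assume moreover that Z_F(2) ≠ 0, Z_F(3) ≠ 0 and Z_K(2) ≠ 0. Then (s−1/2)²·( Z_F(s+1/2)·Z_K(s+1/2)/(Z_F(s+5/2)·Z_K(s+3/2)) + Z_F(s+3/2)·Z_K(s+1/2)·Z_F(s−1/2)·Z_F(2s)/(Z_F(s+5/2)·Z_K(s+3/2)·Z_F(s+1/2)·Z_F(2s+1)) + Z_F(s−3/2)·Z_K(s−1/2)·Z_F(2s)/(Z_F(s+5/2)·Z_K(s+3/2)·Z_F(2s+1)) ) tends to 0 as s → 1/2 along s ≠ 1/2. (Each of the three summands has a pole of order 2 at s = 1/2, but the order-2 parts cancel, using Z_F(−1) = Z_F(2); this is the cancellation of the double poles of the intertwining operators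 indexed by {w₍₂₁₃₎, w₍₂₃₂₁₎, w₍₂₁₃₂₁₃₂₎} in the case E = F×K at s = 1/2 with trivial character.) -/
open Filter Topology

private lemma aux_affine (a c d : ℂ) (hd : d ≠ 0) :
    Tendsto (fun s : ℂ => d * s + c) (𝓝[≠] a) (𝓝[≠] (d * a + c)) := by
  rw [tendsto_nhdsWithin_iff]
  constructor
  · exact (((continuous_const.mul continuous_id).add continuous_const).tendsto a).mono_left
      nhdsWithin_le_nhds
  · filter_upwards [self_mem_nhdsWithin] with s hs
    simp only [Set.mem_compl_iff, Set.mem_singleton_iff] at hs ⊢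
    intro h
    exact hs (mul_left_cancel₀ hd (by linear_combination h))

set_option maxHeartbeats 1000000 in
theorem completed_zeta_FK_order2_cancellation (Z_F Z_K : ℂ → ℂ) (r_F r_K : ℝ)
    (hdiff_F : ∀ s : ℂ, s ≠ 0 → s ≠ 1 → DifferentiableAt ℂ Z_F s)
    (hfe_F : ∀ s : ℂ, Z_F (1 - s) = Z_F s)
    (hr_F : 0 < r_F)
    (hres_F : Tendsto (fun s : ℂ => (s - 1) * Z_F s) (𝓝[≠] 1) (𝓝 (r_F : ℂ)))
    (hdiff_K : ∀ s : ℂ, s ≠ 0 → s ≠ 1 → DifferentiableAt ℂ Z_K s)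
    (hfe_K : ∀ s : ℂ, Z_K (1 - s) = Z_K s)
    (hr_K : 0 < r_K)
    (hres_K : Tendsto (fun s : ℂ => (s - 1) * Z_K s) (𝓝[≠] 1) (𝓝 (r_K : ℂ)))
    (h2 : Z_F 2 ≠ 0) (h3 : Z_F 3 ≠ 0) (hK2 : Z_K 2 ≠ 0) :
    Tendsto (fun s : ℂ => (s - 1/2)^2 *
      (Z_F (s + 1/2) * Z_K (s + 1/2) / (Z_F (s + 5/2) * Z_K (s + 3/2)) +
        Z_F (s + 3/2) * Z_K (s + 1/2) * Z_F (s - 1/2) * Z_F (2*s) /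
          (Z_F (s + 5/2) * Z_K (s + 3/2) * Z_F (s + 1/2) * Z_F (2*s + 1)) +
        Z_F (s - 3/2) * Z_K (s - 1/2) * Z_F (2*s) /
          (Z_F (s + 5/2) * Z_K (s + 3/2) * Z_F (2*s + 1))))
      (𝓝[≠] (1/2)) (𝓝 0) := by
  have hrF' : (r_F : ℂ) ≠ 0 := by exact_mod_cast hr_F.ne'
  -- affine maps into the punctured neighborhood of 1
  have hm1 : Tendsto (fun s : ℂ => s + 1/2) (𝓝[≠] (1/2 : ℂ)) (𝓝[≠] (1 : ℂ)) := by
    have := aux_affine (1/2) (1/2) 1 one_ne_zero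
    norm_num at this
    exact this.congr (fun s => by ring)
  have hm2 : Tendsto (fun s : ℂ => 3/2 - s) (𝓝[≠] (1/2 : ℂ)) (𝓝[≠] (1 : ℂ)) := by
    have := aux_affine (1/2) (3/2) (-1) (by norm_num)
    norm_num at this
    exact this.congr (fun s => by ring)
  have hm3 : Tendsto (fun s : ℂ => 2 * s) (𝓝[≠] (1/2 : ℂ)) (𝓝[≠] (1 : ℂ)) := by
    have := aux_affine (1/2) 0 2 two_ne_zero
    norm_num at this
    exact this
  -- pole factor limits
  have hA : Tendsto (fun s : ℂ => (s - 1/2) * Z_F (s + 1/2)) (𝓝[≠] (1/2 : ℂ)) (𝓝 (r_F : ℂ)) :=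
    (hres_F.comp hm1).congr (fun s => by simp only [Function.comp]; ring)
  have hB : Tendsto (fun s : ℂ => (s - 1/2) * Z_K (s + 1/2)) (𝓝[≠] (1/2 : ℂ)) (𝓝 (r_K : ℂ)) :=
    (hres_K.comp hm1).congr (fun s => by simp only [Function.comp]; ring)
  have hC : Tendsto (fun s : ℂ => (s - 1/2) * Z_F (s - 1/2)) (𝓝[≠] (1/2 : ℂ))
      (𝓝 (-(r_F : ℂ))) := by
    refine ((hres_F.comp hm2).neg).congr (fun s => ?_)
    have hz : Z_F (3/2 - s) = Z_F (s - 1/2) := by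
      rw [show (3/2 - s : ℂ) = 1 - (s - 1/2) by ring, hfe_F]
    simp only [Function.comp]
    rw [hz]; ring
  have hE : Tendsto (fun s : ℂ => (s - 1/2) * Z_K (s - 1/2)) (𝓝[≠] (1/2 : ℂ))
      (𝓝 (-(r_K : ℂ))) := by
    refine ((hres_K.comp hm2).neg).congr (fun s => ?_)
    have hz : Z_K (3/2 - s) = Z_K (s - 1/2) := by
      rw [show (3/2 - s : ℂ) = 1 - (s - 1/2) by ring, hfe_K]
    simp only [Function.comp]
    rw [hz]; ring
  have hD : Tendsto (fun s : ℂ => (s - 1/2) * Z_F (2 * s)) (𝓝[≠] (1/2 : ℂ))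
      (𝓝 ((1/2 : ℂ) * r_F)) := by
    refine ((hres_F.comp hm3).const_mul (1/2 : ℂ)).congr (fun s => ?_)
    simp only [Function.comp]
    ring
  -- continuity limits
  have cont : ∀ (Z : ℂ → ℂ), (∀ s : ℂ, s ≠ 0 → s ≠ 1 → DifferentiableAt ℂ Z s) →
      ∀ (f : ℂ → ℂ) (b : ℂ), b ≠ 0 → b ≠ 1 → Continuous f → f (1/2) = b →
      Tendsto (fun s : ℂ => Z (f s)) (𝓝[≠] (1/2 : ℂ)) (𝓝 (Z b)) := by
    intro Z hZ f b hb0 hb1 hf hfb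
    exact ((hZ b hb0 hb1).continuousAt.tendsto).comp
      ((hf.tendsto' (1/2) b hfb).mono_left nhdsWithin_le_nhds)
  have hP : Tendsto (fun s : ℂ => Z_F (s + 5/2)) (𝓝[≠] (1/2 : ℂ)) (𝓝 (Z_F 3)) :=
    cont Z_F hdiff_F _ 3 (by norm_num) (by norm_num)
      (continuous_id.add continuous_const) (by norm_num)
  have hQ : Tendsto (fun s : ℂ => Z_K (s + 3/2)) (𝓝[≠] (1/2 : ℂ)) (𝓝 (Z_K 2)) :=
    cont Z_K hdiff_K _ 2 (by norm_num) (by norm_num)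
      (continuous_id.add continuous_const) (by norm_num)
  have hR : Tendsto (fun s : ℂ => Z_F (s + 3/2)) (𝓝[≠] (1/2 : ℂ)) (𝓝 (Z_F 2)) :=
    cont Z_F hdiff_F _ 2 (by norm_num) (by norm_num)
      (continuous_id.add continuous_const) (by norm_num)
  have hW : Tendsto (fun s : ℂ => Z_F (2 * s + 1)) (𝓝[≠] (1/2 : ℂ)) (𝓝 (Z_F 2)) :=
    cont Z_F hdiff_F _ 2 (by norm_num) (by norm_num)
      ((continuous_const.mul continuous_id).add continuous_const) (by norm_num)
  have hV : Tendsto (fun s : ℂ => Z_F (s - 3/2)) (𝓝[≠] (1/2 : ℂ)) (𝓝 (Z_F 2)) := by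
    have := cont Z_F hdiff_F (fun s => 5/2 - s) 2 (by norm_num) (by norm_num)
      (continuous_const.sub continuous_id) (by norm_num)
    refine this.congr (fun s => ?_)
    show Z_F (5/2 - s) = Z_F (s - 3/2)
    rw [show (5/2 - s : ℂ) = 1 - (s - 3/2) by ring, hfe_F]
  -- the three regularized terms
  have hT1 := (hA.mul hB).div (hP.mul hQ) (mul_ne_zero h3 hK2)
  have hT2 := (((hR.mul hB).mul hC).mul hD).div
    (((hP.mul hQ).mul hA).mul hW)
    (mul_ne_zero (mul_ne_zero (mul_ne_zero h3 hK2) hrF') h2)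
  have hT3 := ((hV.mul hE).mul hD).div ((hP.mul hQ).mul hW)
    (mul_ne_zero (mul_ne_zero h3 hK2) h2)
  have hsum := (hT1.add hT2).add hT3
  have hL : (r_F : ℂ) * r_K / (Z_F 3 * Z_K 2) +
      Z_F 2 * r_K * -(r_F : ℂ) * ((1/2 : ℂ) * r_F) / (Z_F 3 * Z_K 2 * r_F * Z_F 2) +
      Z_F 2 * -(r_K : ℂ) * ((1/2 : ℂ) * r_F) / (Z_F 3 * Z_K 2 * Z_F 2) = 0 := by
    have d1 : Z_F 3 * Z_K 2 ≠ 0 := mul_ne_zero h3 hK2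
    have d2 : Z_F 3 * Z_K 2 * r_F * Z_F 2 ≠ 0 :=
      mul_ne_zero (mul_ne_zero d1 hrF') h2
    have d3 : Z_F 3 * Z_K 2 * Z_F 2 ≠ 0 := mul_ne_zero d1 h2
    rw [div_add_div _ _ d1 d2, div_add_div _ _ (mul_ne_zero d1 d2) d3, div_eq_zero_iff]
    left
    ring
  rw [hL] at hsum
  refine hsum.congr' ?_
  filter_upwards [self_mem_nhdsWithin] with s hs
  have hts : s ≠ (1/2 : ℂ) := hs
  have ht : s - 1/2 ≠ 0 := sub_ne_zero.mpr hts
  have hcan : Z_F (s + 3/2) * ((s - 1/2) * Z_K (s + 1/2)) * ((s - 1/2) * Z_F (s - 1/2)) *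
        ((s - 1/2) * Z_F (2*s)) /
      (Z_F (s + 5/2) * Z_K (s + 3/2) * ((s - 1/2) * Z_F (s + 1/2)) * Z_F (2*s + 1)) =
      (s - 1/2)^2 * (Z_F (s + 3/2) * Z_K (s + 1/2) * Z_F (s - 1/2) * Z_F (2*s)) /
      (Z_F (s + 5/2) * Z_K (s + 3/2) * Z_F (s + 1/2) * Z_F (2*s + 1)) := by
    rw [show Z_F (s + 5/2) * Z_K (s + 3/2) * ((s - 1/2) * Z_F (s + 1/2)) * Z_F (2*s + 1) =
        (s - 1/2) * (Z_F (s + 5/2) * Z_K (s + 3/2) * Z_F (s + 1/2) * Z_F (2*s + 1)) by ring,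
      show Z_F (s + 3/2) * ((s - 1/2) * Z_K (s + 1/2)) * ((s - 1/2) * Z_F (s - 1/2)) *
        ((s - 1/2) * Z_F (2*s)) =
        (s - 1/2) * ((s - 1/2)^2 * (Z_F (s + 3/2) * Z_K (s + 1/2) * Z_F (s - 1/2) * Z_F (2*s)))
        by ring,
      mul_div_mul_left _ _ ht]
  simp only [Pi.div_apply]
  rw [hcan]
  ring
end

section
/- Let Z_F : ℂ → ℂ and Z_E : ℂ → ℂ satisfy the completed-zeta axioms with residues r_F and r_E respectively, and assume moreover that Z_F(2) ≠ 0, Z_F(3) ≠ 0 and Z_E(2) ≠ 0. Then there exists a NONZERO complex number L such that (s−1/2)·( Z_F(s+3/2)·Z_E(s+1/2)/(Z_F(s+5/2)·Z_E(s+3/2)) + Z_F(s−3/2)·Z_F(s+3/2)·Z_E(s−1/2)·Z_F(2s)/(Z_F(s−1/2)·Z_F(s+5/2)·Z_E(s+3/2)·Z_F(2s+1)) ) tends to L as s → 1/2 along s ≠ 1/2. (This is the non-vanishing of the residue at s = 1/2 of the sum of the two Gindikin–Karpelevich factors J(w₍₂₁₎, 1_s) + J(w₍₂₁₂₁₂₎,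 1_s), applied with Z_F = ẑ_F and Z_E = ẑ_E for a cubic Galois field extension E/F; it shows that the degenerate Eisenstein series E_E(Id, f_s⁰, s, g) attains a simple pole at s = 1/2, using the positivity of the residues coming from the class number formula.) -/
open Filter Topology

lemma affine_tendsto_punctured (m c a b : ℂ) (hm : m ≠ 0) (hb : b = m * a + c) :
    Tendsto (fun s : ℂ => m * s + c) (𝓝[≠] a) (𝓝[≠] b) := by
  subst hb
  refine ((continuous_const.mul continuous_id).add
    continuous_const).continuousWithinAt.tendsto_nhdsWithin ?_
  intro x hx h
  simp only [id, Set.mem_compl_iff, Set.mem_singleton_iff] at hx h ⊢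
  exact hx (mul_left_cancel₀ hm (add_right_cancel h))

theorem completed_zeta_FE_residue_nonzero (Z_F Z_E : ℂ → ℂ) (r_F r_E : ℝ)
    (hdiff_F : ∀ s : ℂ, s ≠ 0 → s ≠ 1 → DifferentiableAt ℂ Z_F s)
    (hfe_F : ∀ s : ℂ, Z_F (1 - s) = Z_F s)
    (hr_F : 0 < r_F)
    (hres_F : Tendsto (fun s : ℂ => (s - 1) * Z_F s) (𝓝[≠] 1) (𝓝 (r_F : ℂ)))
    (hdiff_E : ∀ s : ℂ, s ≠ 0 → s ≠ 1 → DifferentiableAt ℂ Z_E s)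
    (hfe_E : ∀ s : ℂ, Z_E (1 - s) = Z_E s)
    (hr_E : 0 < r_E)
    (hres_E : Tendsto (fun s : ℂ => (s - 1) * Z_E s) (𝓝[≠] 1) (𝓝 (r_E : ℂ)))
    (h2 : Z_F 2 ≠ 0) (h3 : Z_F 3 ≠ 0) (hE2 : Z_E 2 ≠ 0) :
    ∃ L : ℂ, L ≠ 0 ∧
      Tendsto (fun s : ℂ => (s - 1/2) *
        (Z_F (s + 3/2) * Z_E (s + 1/2) / (Z_F (s + 5/2) * Z_E (s + 3/2)) +
          Z_F (s - 3/2) * Z_F (s + 3/2) * Z_E (s - 1/2) * Z_F (2*s) /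
            (Z_F (s - 1/2) * Z_F (s + 5/2) * Z_E (s + 3/2) * Z_F (2*s + 1))))
        (𝓝[≠] (1/2)) (𝓝 L) := by
  have hrF0 : (r_F : ℂ) ≠ 0 := by exact_mod_cast hr_F.ne'
  have hrE0 : (r_E : ℂ) ≠ 0 := by exact_mod_cast hr_E.ne'
  -- continuous pieces
  have t1 : Tendsto (fun s : ℂ => Z_F (s + 3/2)) (𝓝[≠] (1/2)) (𝓝 (Z_F 2)) := by
    have key : Tendsto (fun s : ℂ => s + 3/2) (𝓝[≠] (1/2 : ℂ)) (𝓝 2) :=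
      ((continuous_add_right (3/2 : ℂ)).tendsto' (1/2) 2 (by norm_num)).mono_left
        nhdsWithin_le_nhds
    exact ((hdiff_F 2 (by norm_num) (by norm_num)).continuousAt.tendsto).comp key
  have t2 : Tendsto (fun s : ℂ => Z_F (s + 5/2)) (𝓝[≠] (1/2)) (𝓝 (Z_F 3)) := by
    exact ((hdiff_F 3 (by norm_num) (by norm_num)).continuousAt.tendsto).comp
      (((continuous_add_right (5/2 : ℂ)).tendsto' (1/2) 3 (by norm_num)).mono_left
        nhdsWithin_le_nhds)
  have t3 : Tendsto (fun s : ℂ => Z_E (s + 3/2)) (𝓝[≠] (1/2)) (𝓝 (Z_E 2)) := by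
    exact ((hdiff_E 2 (by norm_num) (by norm_num)).continuousAt.tendsto).comp
      (((continuous_add_right (3/2 : ℂ)).tendsto' (1/2) 2 (by norm_num)).mono_left
        nhdsWithin_le_nhds)
  have hFm1 : Z_F (-1) = Z_F 2 := by
    have := hfe_F 2; norm_num at this; exact this
  have t4 : Tendsto (fun s : ℂ => Z_F (s - 3/2)) (𝓝[≠] (1/2)) (𝓝 (Z_F 2)) := by
    rw [← hFm1]
    exact ((hdiff_F (-1) (by norm_num) (by norm_num)).continuousAt.tendsto).comp
      (((continuous_sub_right (3/2 : ℂ)).tendsto' (1/2) (-1) (by norm_num)).mono_left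
        nhdsWithin_le_nhds)
  have t5 : Tendsto (fun s : ℂ => Z_F (2*s + 1)) (𝓝[≠] (1/2)) (𝓝 (Z_F 2)) := by
    exact ((hdiff_F 2 (by norm_num) (by norm_num)).continuousAt.tendsto).comp
      ((((continuous_const.mul continuous_id).add continuous_const).tendsto' (1/2) 2
        (by norm_num)).mono_left nhdsWithin_le_nhds)
  -- pole pieces
  have hA : Tendsto (fun s : ℂ => (s - 1/2) * Z_E (s + 1/2)) (𝓝[≠] (1/2)) (𝓝 (r_E : ℂ)) := by
    have h := hres_E.comp (affine_tendsto_punctured 1 (1/2) (1/2) 1 one_ne_zero (by norm_num))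
    refine h.congr fun s => ?_
    simp only [Function.comp]
    rw [show (1:ℂ) * s + 1/2 = s + 1/2 by ring, show s + 1/2 - 1 = s - 1/2 by ring]
  have hB : Tendsto (fun s : ℂ => (s - 1/2) * Z_E (s - 1/2)) (𝓝[≠] (1/2)) (𝓝 (-(r_E : ℂ))) := by
    have h := (hres_E.comp (affine_tendsto_punctured (-1) (3/2) (1/2) 1 (by norm_num)
      (by norm_num))).neg
    refine h.congr fun s => ?_
    simp only [Function.comp]
    rw [show (-1:ℂ) * s + 3/2 = 1 - (s - 1/2) by ring, hfe_E]
    ring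
  have hC : Tendsto (fun s : ℂ => (s - 1/2) * Z_F (2*s)) (𝓝[≠] (1/2))
      (𝓝 (2⁻¹ * (r_F : ℂ))) := by
    have h := (hres_F.comp (affine_tendsto_punctured 2 0 (1/2) 1 two_ne_zero
      (by norm_num))).const_mul (2⁻¹ : ℂ)
    refine h.congr fun s => ?_
    simp only [Function.comp]
    rw [show (2:ℂ) * s + 0 = 2*s by ring]
    ring
  have hD : Tendsto (fun s : ℂ => (s - 1/2) * Z_F (s - 1/2)) (𝓝[≠] (1/2)) (𝓝 (-(r_F : ℂ))) := by
    have h := (hres_F.comp (affine_tendsto_punctured (-1) (3/2) (1/2) 1 (by norm_num)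
      (by norm_num))).neg
    refine h.congr fun s => ?_
    simp only [Function.comp]
    rw [show (-1:ℂ) * s + 3/2 = 1 - (s - 1/2) by ring, hfe_F]
    ring
  -- the regularized expression
  set g : ℂ → ℂ := fun s =>
    Z_F (s + 3/2) * ((s - 1/2) * Z_E (s + 1/2)) / (Z_F (s + 5/2) * Z_E (s + 3/2)) +
      Z_F (s - 3/2) * Z_F (s + 3/2) * ((s - 1/2) * Z_E (s - 1/2)) * ((s - 1/2) * Z_F (2*s)) /
        (((s - 1/2) * Z_F (s - 1/2)) * Z_F (s + 5/2) * Z_E (s + 3/2) * Z_F (2*s + 1)) with hg_def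
  set L : ℂ := Z_F 2 * (r_E : ℂ) / (Z_F 3 * Z_E 2) +
      Z_F 2 * Z_F 2 * (-(r_E : ℂ)) * (2⁻¹ * (r_F : ℂ)) /
        ((-(r_F : ℂ)) * Z_F 3 * Z_E 2 * Z_F 2) with hL_def
  have hg : Tendsto g (𝓝[≠] (1/2)) (𝓝 L) := by
    exact ((t1.mul hA).div (t2.mul t3) (mul_ne_zero h3 hE2)).add
      ((((t4.mul t1).mul hB).mul hC).div (((hD.mul t2).mul t3).mul t5)
        (by
          refine mul_ne_zero (mul_ne_zero (mul_ne_zero ?_ h3) hE2) h2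
          simpa using hrF0))
  have hden1 : (-(r_F:ℂ)) * Z_F 3 * Z_E 2 * Z_F 2 ≠ 0 :=
    mul_ne_zero (mul_ne_zero (mul_ne_zero (neg_ne_zero.mpr hrF0) h3) hE2) h2
  have hden2 : Z_F 3 * Z_E 2 * 2 ≠ 0 := mul_ne_zero (mul_ne_zero h3 hE2) two_ne_zero
  have e2 : Z_F 2 * Z_F 2 * (-(r_E:ℂ)) * (2⁻¹ * (r_F:ℂ)) / ((-(r_F:ℂ)) * Z_F 3 * Z_E 2 * Z_F 2)
      = Z_F 2 * (r_E:ℂ) / (Z_F 3 * Z_E 2 * 2) := by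
    rw [div_eq_div_iff hden1 hden2]
    ring
  have hL : L ≠ 0 := by
    have hL' : L = Z_F 2 * (r_E:ℂ) * 3 / (Z_F 3 * Z_E 2 * 2) := by
      rw [hL_def, e2, div_add_div _ _ (mul_ne_zero h3 hE2) hden2,
        div_eq_div_iff (mul_ne_zero (mul_ne_zero h3 hE2) hden2) hden2]
      ring
    rw [hL']
    exact div_ne_zero (mul_ne_zero (mul_ne_zero h2 hrE0) (by norm_num)) hden2
  refine ⟨L, hL, hg.congr' ?_⟩
  filter_upwards [self_mem_nhdsWithin] with s hs
  simp only [Set.mem_compl_iff, Set.mem_singleton_iff] at hs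
  have hs' : s - 1/2 ≠ 0 := sub_ne_zero.mpr hs
  rw [hg_def]
  simp only []
  rw [mul_add]
  congr 1
  · rw [mul_div_assoc, mul_div_assoc]
    ring_nf
  · have : ((s - 1/2) * Z_F (s - 1/2)) * Z_F (s + 5/2) * Z_E (s + 3/2) * Z_F (2*s + 1)
        = (s - 1/2) * (Z_F (s - 1/2) * Z_F (s + 5/2) * Z_E (s + 3/2) * Z_F (2*s + 1)) := by ring
    rw [this, show Z_F (s - 3/2) * Z_F (s + 3/2) * ((s - 1/2) * Z_E (s - 1/2)) *
        ((s - 1/2) * Z_F (2*s)) = (s - 1/2) * ((s - 1/2) *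
        (Z_F (s - 3/2) * Z_F (s + 3/2) * Z_E (s - 1/2) * Z_F (2*s))) by ring,
      mul_div_mul_left _ _ hs', mul_div_assoc]
end

section
/- For the completed Riemann zeta function Λ, the expression (s−1/2)²·( Λ(s+1/2)³ + 3·Λ(s−1/2)·Λ(s+1/2)² + 3·Λ(s−1/2)²·Λ(s+1/2) + Λ(s−1/2)³ )·Λ(2s) tends to 0 as s → 1/2 along s ≠ 1/2. (Each of the four summands multiplied by Λ(2s) has a pole of order 4 at s = 1/2, but the Laurent coefficients of order −4, −3 and −2 cancel; this is the cancellation of the order-4 poles in the constant term of the degenerate Eisenstein series on split Spin₈ over ℚ at s = 1/2 with trivial character.) -/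
open Filter Topology

private lemma sum_tendsto :
    Tendsto (fun s : ℂ => completedRiemannZeta (s + 1/2) + completedRiemannZeta (s - 1/2))
      (𝓝 (1/2 : ℂ))
      (𝓝 (completedRiemannZeta₀ 1 + completedRiemannZeta₀ 0 - 1 - 1)) := by
  have heq : ∀ s : ℂ,
      completedRiemannZeta (s + 1/2) + completedRiemannZeta (s - 1/2)
        = completedRiemannZeta₀ (s + 1/2) + completedRiemannZeta₀ (s - 1/2)
          - 1 / (s + 1/2) - 1 / (3/2 - s) := by
    intro s
    rw [completedRiemannZeta_eq, completedRiemannZeta_eq]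
    have h1 : (1 : ℂ) - (s + 1/2) = -(s - 1/2) := by ring
    have h2 : (1 : ℂ) - (s - 1/2) = 3/2 - s := by ring
    rw [h1, h2]
    simp only [one_div, inv_neg]
    ring
  simp only [heq]
  have hc : ContinuousAt (fun s : ℂ =>
      completedRiemannZeta₀ (s + 1/2) + completedRiemannZeta₀ (s - 1/2)
        - 1 / (s + 1/2) - 1 / (3/2 - s)) (1/2) := by
    apply ContinuousAt.sub
    apply ContinuousAt.sub
    · exact ((differentiable_completedZeta₀.continuous.comp (continuous_id.add
        continuous_const)).add (differentiable_completedZeta₀.continuous.comp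
        (continuous_id.sub continuous_const))).continuousAt
    · exact ContinuousAt.div continuousAt_const (by fun_prop) (by norm_num)
    · exact ContinuousAt.div continuousAt_const (by fun_prop) (by norm_num)
  have h := hc.tendsto
  norm_num at h
  simpa only [one_div] using h

private lemma res_tendsto :
    Tendsto (fun s : ℂ => (s - 1/2) * completedRiemannZeta (2 * s))
      (𝓝[≠] (1/2 : ℂ)) (𝓝 (1/2)) := by
  have hmap : Tendsto (fun s : ℂ => 2 * s) (𝓝[≠] (1/2 : ℂ)) (𝓝[≠] (1 : ℂ)) := by
    rw [tendsto_nhdsWithin_iff]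
    constructor
    · have h0 : Tendsto (fun s : ℂ => 2 * s) (𝓝 (1/2 : ℂ)) (𝓝 (2 * (1/2 : ℂ))) :=
        ((continuous_const.mul continuous_id).tendsto _)
      norm_num at h0
      exact h0.mono_left nhdsWithin_le_nhds
    · filter_upwards [self_mem_nhdsWithin] with s hs
      simp only [Set.mem_compl_iff, Set.mem_singleton_iff] at hs ⊢
      exact fun h => hs (by linear_combination h / 2)
  have h := (completedRiemannZeta_residue_one.comp hmap).const_mul (2⁻¹ : ℂ)
  simp only [Function.comp_def] at h
  have : (fun s : ℂ => (2 : ℂ)⁻¹ * ((2 * s - 1) * completedRiemannZeta (2 * s)))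
      = fun s : ℂ => (s - 1/2) * completedRiemannZeta (2 * s) := by
    funext s; ring
  rw [this] at h
  simpa using h

theorem completedRiemannZeta_order4_cancellation :
    Tendsto (fun s : ℂ => (s - 1/2)^2 *
      (completedRiemannZeta (s + 1/2)^3 +
        3 * completedRiemannZeta (s - 1/2) * completedRiemannZeta (s + 1/2)^2 +
        3 * completedRiemannZeta (s - 1/2)^2 * completedRiemannZeta (s + 1/2) +
        completedRiemannZeta (s - 1/2)^3) * completedRiemannZeta (2*s))
      (𝓝[≠] (1/2)) (𝓝 0) := by
  have heq : ∀ s : ℂ, (s - 1/2)^2 *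
      (completedRiemannZeta (s + 1/2)^3 +
        3 * completedRiemannZeta (s - 1/2) * completedRiemannZeta (s + 1/2)^2 +
        3 * completedRiemannZeta (s - 1/2)^2 * completedRiemannZeta (s + 1/2) +
        completedRiemannZeta (s - 1/2)^3) * completedRiemannZeta (2*s)
      = (s - 1/2) *
        (completedRiemannZeta (s + 1/2) + completedRiemannZeta (s - 1/2))^3 *
        ((s - 1/2) * completedRiemannZeta (2 * s)) := by
    intro s; ring
  simp only [heq]
  have h1 : Tendsto (fun s : ℂ => (s - 1/2) *
      (completedRiemannZeta (s + 1/2) + completedRiemannZeta (s - 1/2))^3)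
      (𝓝[≠] (1/2 : ℂ)) (𝓝 0) := by
    have ha : Tendsto (fun s : ℂ => s - 1/2) (𝓝[≠] (1/2 : ℂ)) (𝓝 0) := by
      have h0 : Tendsto (fun s : ℂ => s - 1/2) (𝓝 (1/2 : ℂ)) (𝓝 ((1:ℂ)/2 - 1/2)) :=
        ((continuous_id.sub continuous_const).tendsto _)
      norm_num at h0
      simpa using h0.mono_left nhdsWithin_le_nhds
    have hb : Tendsto (fun s : ℂ =>
        (completedRiemannZeta (s + 1/2) + completedRiemannZeta (s - 1/2))^3)
        (𝓝[≠] (1/2 : ℂ))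
        (𝓝 ((completedRiemannZeta₀ 1 + completedRiemannZeta₀ 0 - 1 - 1)^3)) :=
      (sum_tendsto.mono_left nhdsWithin_le_nhds).pow 3
    simpa using ha.mul hb
  simpa using h1.mul res_tendsto
end

section
/- For the completed Riemann zeta function Λ, the expression (s−1/2)²·( Λ(s+1/2)³·Λ(2s+1) + 3·Λ(s−1/2)·Λ(s+1/2)·Λ(2s)·Λ(s+3/2) + Λ(s−1/2)²·Λ(s−3/2)·Λ(2s) ) tends to 0 as s → 1/2 along s ≠ 1/2. (Each summand has a pole of order 3 at s = 1/2, but the order −3 and −2 Laurent coefficients cancel, using Λ(−1) = Λ(2); this is the cancellation of the order-3 poles in the split Spin₈ case over ℚ at s = 1/2 with trivial character.) -/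
/-!
Put `t = s - 1/2` and `F t = t * Λ (1 + t)`, which is regular at `t = 0`. The functional
equation gives `t * Λ t = -F (-t)` and `Λ (s - 3/2) = Λ (2 - t)`, so the expression equals
`N t / (2 * t)` with `N = cancellationNumerator F Λ`. For arbitrary `F` and `L`, differentiable
at `0` and `2` respectively, this combination vanishes to second order at `0`: that is the
cancellation of the order-3 and order-2 poles.
-/

open Filter Topology

section CommRing

variable {R : Type*} [CommRing R]

def cancellationNumerator (F L : R → R) (t : R) : R :=
  2 * F t ^ 3 * L (2 + 2 * t) - 3 * F (-t) * F t * F (2 * t) * L (2 + t) +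
    F (-t) ^ 2 * F (2 * t) * L (2 - t)

lemma cancellationNumerator_zero (F L : R → R) : cancellationNumerator F L 0 = 0 := by
  simp only [cancellationNumerator, neg_zero, mul_zero, add_zero, sub_zero]
  ring

end CommRing

section NontriviallyNormedField

variable {𝕜 : Type*} [NontriviallyNormedField 𝕜] {F L : 𝕜 → 𝕜}

lemma hasDerivAt_cancellationNumerator {b d : 𝕜} (hF : HasDerivAt F b 0)
    (hL : HasDerivAt L d 2) : HasDerivAt (cancellationNumerator F L) 0 0 := by
  have hFneg : HasDerivAt (fun t => F (-t)) (-b) 0 := by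
    simpa [Function.comp_def] using hF.comp_of_eq 0 (hasDerivAt_neg (0 : 𝕜)) neg_zero.symm
  have hFmul : HasDerivAt (fun t => F (2 * t)) (b * 2) 0 := by
    simpa [Function.comp_def] using
      hF.comp_of_eq 0 ((hasDerivAt_id (0 : 𝕜)).const_mul 2) (mul_zero 2).symm
  have hLmul : HasDerivAt (fun t => L (2 + 2 * t)) (d * 2) 0 := by
    simpa [Function.comp_def] using
      hL.comp_of_eq 0 (((hasDerivAt_id (0 : 𝕜)).const_mul 2).const_add 2) (by simp)
  have hLadd : HasDerivAt (fun t => L (2 + t)) d 0 :=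
    .comp_const_add (2 : 𝕜) 0 (by simpa using hL)
  have hLsub : HasDerivAt (fun t => L (2 - t)) (-d) 0 :=
    .comp_const_sub (2 : 𝕜) 0 (by simpa using hL)
  refine ((((hF.pow 3).const_mul 2).mul hLmul).sub
    ((((hFneg.const_mul 3).mul hF).mul hFmul).mul hLadd) |>.add
      (((hFneg.pow 2).mul hFmul).mul hLsub)).congr_deriv ?_
  simp only [Pi.mul_apply, Pi.pow_apply, neg_zero, mul_zero, add_zero, sub_zero]
  ring

lemma tendsto_cancellationNumerator_div_self (hF : DifferentiableAt 𝕜 F 0)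
    (hL : DifferentiableAt 𝕜 L 2) :
    Tendsto (fun t => cancellationNumerator F L t / t) (𝓝[≠] 0) (𝓝 0) := by
  refine (hasDerivAt_cancellationNumerator hF.hasDerivAt hL.hasDerivAt).tendsto_slope_zero.congr
    fun t => ?_
  simp [cancellationNumerator_zero, div_eq_inv_mul]

end NontriviallyNormedField

lemma exists_differentiableAt_mul_completedRiemannZeta_one_add :
    ∃ F : ℂ → ℂ, DifferentiableAt ℂ F 0 ∧ ∀ t ≠ 0, t * completedRiemannZeta (1 + t) = F t := by
  refine ⟨fun t => t * completedRiemannZeta₀ (1 + t) - t / (1 + t) + 1, ?_, fun t ht => ?_⟩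
  · have := differentiable_completedZeta₀
    fun_prop (disch := norm_num)
  · rw [completedRiemannZeta_eq, show 1 - (1 + t) = -t by ring, mul_sub, mul_sub, mul_one_div,
      mul_one_div, div_neg, div_self ht]
    ring

lemma completedRiemannZeta_one_add_eq_div {F : ℂ → ℂ}
    (hF : ∀ t ≠ 0, t * completedRiemannZeta (1 + t) = F t) {t : ℂ} (ht : t ≠ 0) :
    completedRiemannZeta (1 + t) = F t / t := by
  rw [eq_div_iff ht, mul_comm, hF t ht]

lemma completedRiemannZeta_order3_expression_eq {F : ℂ → ℂ}
    (hF : ∀ t ≠ 0, t * completedRiemannZeta (1 + t) = F t) {s : ℂ} (hs : s ≠ 1/2) :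
    (s - 1/2)^2 *
      (completedRiemannZeta (s + 1/2)^3 * completedRiemannZeta (2*s + 1) +
        3 * completedRiemannZeta (s - 1/2) * completedRiemannZeta (s + 1/2) *
          completedRiemannZeta (2*s) * completedRiemannZeta (s + 3/2) +
        completedRiemannZeta (s - 1/2)^2 * completedRiemannZeta (s - 3/2) *
          completedRiemannZeta (2*s)) =
      cancellationNumerator F completedRiemannZeta (s - 1/2) / (2 * (s - 1/2)) := by
  obtain ⟨t, rfl⟩ : ∃ t, s = t + 1/2 := ⟨s - 1/2, by ring⟩
  have ht : t ≠ 0 := by rintro rfl; exact hs (zero_add _)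
  rw [show t + 1/2 - 1/2 = t by ring, show t + 1/2 + 1/2 = 1 + t by ring,
    show 2 * (t + 1/2) = 1 + 2 * t by ring, show 1 + 2 * t + 1 = 2 + 2 * t by ring,
    show t + 1/2 + 3/2 = 2 + t by ring,
    ← completedRiemannZeta_one_sub t, ← completedRiemannZeta_one_sub (t + 1/2 - 3/2),
    show 1 - t = 1 + -t by ring, show 1 - (t + 1/2 - 3/2) = 2 - t by ring,
    completedRiemannZeta_one_add_eq_div hF ht,
    completedRiemannZeta_one_add_eq_div hF (mul_ne_zero two_ne_zero ht),
    completedRiemannZeta_one_add_eq_div hF (neg_ne_zero.mpr ht), cancellationNumerator]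
  field_simp
  ring

theorem completedRiemannZeta_order3_cancellation :
    Tendsto (fun s : ℂ => (s - 1/2)^2 *
      (completedRiemannZeta (s + 1/2)^3 * completedRiemannZeta (2*s + 1) +
        3 * completedRiemannZeta (s - 1/2) * completedRiemannZeta (s + 1/2) *
          completedRiemannZeta (2*s) * completedRiemannZeta (s + 3/2) +
        completedRiemannZeta (s - 1/2)^2 * completedRiemannZeta (s - 3/2) *
          completedRiemannZeta (2*s)))
      (𝓝[≠] (1/2)) (𝓝 0) := by
  obtain ⟨F, hF, hFeq⟩ := exists_differentiableAt_mul_completedRiemannZeta_one_add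
  have hL : DifferentiableAt ℂ completedRiemannZeta 2 :=
    differentiableAt_completedZeta two_ne_zero (by norm_num)
  have hshift : Tendsto (fun s : ℂ => s - 1/2) (𝓝[≠] (1/2)) (𝓝[≠] 0) :=
    (map_subRight_nhdsNE.trans (by rw [sub_self])).le
  have hlim := ((tendsto_cancellationNumerator_div_self hF hL).comp hshift).div_const 2
  rw [zero_div] at hlim
  refine hlim.congr' ?_
  filter_upwards [self_mem_nhdsWithin] with s hs
  rw [completedRiemannZeta_order3_expression_eq hFeq hs, Function.comp_apply, div_div, mul_comm]
end

section
/- For the completed Riemann zeta function Λ, the expression (s−1/2)²·( Λ(s+1/2)·Λ(s+1/2) + Λ(s−1/2)·Λ(s+1/2) + Λ(s+1/2)·Λ(s−1/2) + Λ(s−1/2)·Λ(s−1/2) )·Λ(2s), i.e. (s−1/2)²·(Λ(s+1/2)+Λ(s−1/2))²·Λ(2s), tends to 0 as s → 1/2 along s ≠ 1/2. (Each of the four summands multiplied by Λ(2s) has a pole of order 3 at s = 1/2, but the order −3 and −2 Laurent coefficients cancel in the sum.) -/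
open Filter Topology

theorem completedRiemannZeta_square_order3_cancellation :
    Tendsto (fun s : ℂ => (s - 1/2)^2 *
      (completedRiemannZeta (s + 1/2) * completedRiemannZeta (s + 1/2) +
        completedRiemannZeta (s - 1/2) * completedRiemannZeta (s + 1/2) +
        completedRiemannZeta (s + 1/2) * completedRiemannZeta (s - 1/2) +
        completedRiemannZeta (s - 1/2) * completedRiemannZeta (s - 1/2)) *
      completedRiemannZeta (2*s))
      (𝓝[≠] (1/2)) (𝓝 0) := by
  -- the regular part of Λ(s+1/2) + Λ(s-1/2)
  set g : ℂ → ℂ := fun s => completedRiemannZeta₀ (s + 1/2) + completedRiemannZeta₀ (s - 1/2)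
    - 1 / (s + 1/2) - 1 / (3/2 - s) with hg
  have hgsum : ∀ s : ℂ,
      completedRiemannZeta (s + 1/2) + completedRiemannZeta (s - 1/2) = g s := by
    intro s
    rw [completedRiemannZeta_eq, completedRiemannZeta_eq, hg]
    have h1 : (1 : ℂ) - (s + 1/2) = -(s - 1/2) := by ring
    have h2 : (1 : ℂ) - (s - 1/2) = 3/2 - s := by ring
    rw [h1, h2, div_neg]
    ring
  -- g is continuous at 1/2
  have hgcont : Tendsto g (𝓝[≠] (1/2 : ℂ)) (𝓝 (g (1/2))) := by
    apply Tendsto.mono_left _ nhdsWithin_le_nhds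
    have : ContinuousAt g (1/2 : ℂ) := by
      apply ContinuousAt.sub
      apply ContinuousAt.sub
      apply ContinuousAt.add
      · exact (differentiable_completedZeta₀.continuous.comp
          (continuous_id.add continuous_const)).continuousAt
      · exact (differentiable_completedZeta₀.continuous.comp
          (continuous_id.sub continuous_const)).continuousAt
      · apply ContinuousAt.div continuousAt_const
          ((continuous_id.add continuous_const).continuousAt)
        norm_num
      · apply ContinuousAt.div continuousAt_const
          ((continuous_const.sub continuous_id).continuousAt)
        norm_num
    exact this
  -- (s - 1/2)^2 * Λ(2s) → 0
  have hmap : Tendsto (fun s : ℂ => 2 * s) (𝓝[≠] (1/2 : ℂ)) (𝓝[≠] (1 : ℂ)) := by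
    apply Tendsto.inf
    · have : Tendsto (fun s : ℂ => 2 * s) (𝓝 (1/2 : ℂ)) (𝓝 (2 * (1/2) : ℂ)) :=
        (continuous_const.mul continuous_id).tendsto _
      simpa using this
    · refine tendsto_principal_principal.2 fun x hx => ?_
      simp only [Set.mem_compl_iff, Set.mem_singleton_iff] at hx ⊢
      intro h
      apply hx
      have : (2 : ℂ) * x = 2 * (1/2) := by rw [h]; norm_num
      exact mul_left_cancel₀ (by norm_num) this
  have hres : Tendsto (fun s : ℂ => (2*s - 1) * completedRiemannZeta (2*s))
      (𝓝[≠] (1/2 : ℂ)) (𝓝 1) :=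
    completedRiemannZeta_residue_one.comp hmap
  have hsub : Tendsto (fun s : ℂ => s - 1/2) (𝓝[≠] (1/2 : ℂ)) (𝓝 0) := by
    apply Tendsto.mono_left _ nhdsWithin_le_nhds
    have : Tendsto (fun s : ℂ => s - 1/2) (𝓝 (1/2 : ℂ)) (𝓝 (1/2 - 1/2 : ℂ)) :=
      (continuous_id.sub continuous_const).tendsto _
    simpa using this
  -- full product
  have hfull : Tendsto (fun s : ℂ => (g s * g s) * ((s - 1/2) *
      ((2*s - 1) * completedRiemannZeta (2*s))) * (1/2))
      (𝓝[≠] (1/2 : ℂ)) (𝓝 ((g (1/2) * g (1/2)) * (0 * 1) * (1/2))) :=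
    ((hgcont.mul hgcont).mul (hsub.mul hres)).mul tendsto_const_nhds
  have h0 : ((g (1/2) * g (1/2)) * ((0 : ℂ) * 1) * (1/2)) = 0 := by ring
  rw [h0] at hfull
  refine hfull.congr' ?_
  filter_upwards [self_mem_nhdsWithin] with s hs
  rw [← hgsum s]
  ring
end
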